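/- arXiv:1701.04196 — 2 statements merged into one kernel-verified Lean document; each statement's English description precedes it below -/
import Mathlib

section
/- For every character φ of B_ℤ (i.e., every nonzero algebra homomorphism φ : B_ℤ → ℂ), either there exists n ∈ ℤ such that φ(f) = f(n) for all f ∈ B_ℤ, or φ(f) = lim_{k→∞} f(k) for all f ∈ B_ℤ. Conversely, each evaluation functional ε_n : f ↦ f(n) (n ∈ ℤ) and the limit functional ε_∞ : f ↦ lim_{k→∞} f(k) is a character of B_ℤ, and all these characters are pairwise distinct. -/
set_option maxHeartbeats 1000000
set_option synthInstance.maxHeartbeats 400000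


open BoundedContinuousFunction Filter Topology

/-- The indicator function of `{k : ℤ | n ≤ k}` as a bounded (continuous) function `ℤ → ℂ`,
an element of `ℓ∞(ℤ, ℂ)`. -/
noncomputable def indBZ (n : ℤ) : ℤ →ᵇ ℂ :=
  BoundedContinuousFunction.ofNormedAddCommGroup
    (fun k => if n ≤ k then (1:ℂ) else 0)
    (continuous_of_discreteTopology) 1
    (fun k => by by_cases h : n ≤ k <;> simp [h])

lemma indBZ_apply (n k : ℤ) : indBZ n k = if n ≤ k then (1:ℂ) else 0 := rfl

lemma indBZ_mul (n m : ℤ) : indBZ n * indBZ m = indBZ (max n m) := by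
  ext k
  simp only [BoundedContinuousFunction.coe_mul, Pi.mul_apply, indBZ_apply]
  by_cases h1 : n ≤ k <;> by_cases h2 : m ≤ k <;> simp [h1, h2, max_le_iff]

lemma star_indBZ (n : ℤ) : star (indBZ n) = indBZ n := by
  ext k
  simp only [BoundedContinuousFunction.star_apply, indBZ_apply]
  by_cases h : n ≤ k <;> simp [h]

/-- The linear span of `{1_n : n ∈ ℤ}` in `ℓ∞(ℤ, ℂ)`. -/
noncomputable def BZspan : Submodule ℂ (ℤ →ᵇ ℂ) := Submodule.span ℂ (Set.range indBZ)

lemma BZspan_mul_mem {f g : ℤ →ᵇ ℂ} (hf : f ∈ BZspan) (hg : g ∈ BZspan) : f * g ∈ BZspan := by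
  have h : BZspan * BZspan ≤ BZspan := by
    rw [BZspan, Submodule.span_mul_span]
    refine Submodule.span_le.mpr ?_
    rintro x ⟨a, ⟨n, rfl⟩, b, ⟨m, rfl⟩, rfl⟩
    exact Submodule.subset_span ⟨max n m, (indBZ_mul n m).symm⟩
  exact h (Submodule.mul_mem_mul hf hg)

lemma BZspan_star_mem {f : ℤ →ᵇ ℂ} (hf : f ∈ BZspan) : star f ∈ BZspan := by
  induction hf using Submodule.span_induction with
  | mem x hx => obtain ⟨n, rfl⟩ := hx; rw [star_indBZ]; exact Submodule.subset_span ⟨n, rfl⟩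
  | zero => simp only [star_zero]; exact Submodule.zero_mem _
  | add x y _ _ hx hy => rw [star_add]; exact Submodule.add_mem _ hx hy
  | smul c x _ hx => rw [star_smul]; exact Submodule.smul_mem _ _ hx

/-- `B_ℤ`: the closed linear span of `{1_n : n ∈ ℤ}` in `ℓ∞(ℤ, ℂ)`, which is a
(non-unital) C*-subalgebra of `ℓ∞(ℤ, ℂ)`. -/
noncomputable def BZalg : NonUnitalStarSubalgebra ℂ (ℤ →ᵇ ℂ) :=
  NonUnitalStarSubalgebra.topologicalClosure
    { BZspan with
      mul_mem' := BZspan_mul_mem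
      star_mem' := BZspan_star_mem }

/-- Membership in `B_ℤ` is exactly membership in the closed linear span of the `1_n`. -/
lemma BZalg_mem_iff (f : ℤ →ᵇ ℂ) :
    f ∈ BZalg ↔ f ∈ (Submodule.span ℂ (Set.range indBZ)).topologicalClosure := Iff.rfl

lemma mem_BZalg_of_span {f : ℤ →ᵇ ℂ} (hf : f ∈ BZspan) : f ∈ BZalg :=
  (BZalg_mem_iff f).mpr (Submodule.le_topologicalClosure _ hf)

lemma indBZ_mem (n : ℤ) : indBZ n ∈ BZalg :=
  mem_BZalg_of_span (Submodule.subset_span ⟨n, rfl⟩)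

lemma BZalg_coe_set : (BZalg : Set (ℤ →ᵇ ℂ)) = closure (BZspan : Set (ℤ →ᵇ ℂ)) := rfl

lemma BZalg_isClosed : IsClosed (BZalg : Set (ℤ →ᵇ ℂ)) := by
  rw [BZalg_coe_set]; exact isClosed_closure

/-- geometric series trick: characters are norm-bounded by 1 -/
lemma char_norm_le (φ : ↥BZalg →ₙₐ[ℂ] ℂ) (a : ↥BZalg) : ‖φ a‖ ≤ ‖a‖ := by
  by_contra hcon
  push_neg at hcon
  have hφa : φ a ≠ 0 := by
    intro h0; rw [h0, norm_zero] at hcon; exact (norm_nonneg _).not_gt hcon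
  set b : ↥BZalg := (φ a)⁻¹ • a with hbdef
  have hφb : φ b = 1 := by
    rw [hbdef, map_smul, smul_eq_mul, inv_mul_cancel₀ hφa]
  have hbn : ‖(b : ℤ →ᵇ ℂ)‖ < 1 := by
    have h1 : ((b : ℤ →ᵇ ℂ)) = (φ a)⁻¹ • (a : ℤ →ᵇ ℂ) := rfl
    rw [h1, norm_smul, norm_inv]
    rw [inv_mul_lt_iff₀ (lt_of_le_of_lt (norm_nonneg _) hcon), mul_one]
    exact hcon
  set u : ℕ → ℤ →ᵇ ℂ := fun n => (b : ℤ →ᵇ ℂ) ^ (n + 1) with hu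
  have hsum : Summable u := by
    refine Summable.of_norm_bounded (g := fun n => ‖(b : ℤ →ᵇ ℂ)‖ ^ (n+1)) ?_ ?_
    · have := (summable_geometric_of_lt_one (norm_nonneg (b : ℤ →ᵇ ℂ)) hbn).mul_right
        ‖(b : ℤ →ᵇ ℂ)‖
      simpa [pow_succ] using this
    · intro n; exact norm_pow_le' _ n.succ_pos
  set c : ℤ →ᵇ ℂ := ∑' n, u n with hc
  have hpow : ∀ n : ℕ, (b : ℤ →ᵇ ℂ) ^ (n + 1) ∈ BZalg := by
    intro n
    induction n with
    | zero => simpa using b.2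
    | succ k ih => rw [pow_succ]; exact mul_mem ih b.2
  have hcmem : c ∈ BZalg := by
    have ht := hsum.hasSum.tendsto_sum_nat
    exact BZalg_isClosed.mem_of_tendsto ht
      (Filter.Eventually.of_forall fun N => sum_mem fun i _ => hpow i)
  have hkey : c = (b : ℤ →ᵇ ℂ) + (b : ℤ →ᵇ ℂ) * c := by
    have h0 : c = u 0 + ∑' n, u (n + 1) := Summable.tsum_eq_zero_add hsum
    have h1 : ∑' n, u (n + 1) = (b : ℤ →ᵇ ℂ) * c := by
      rw [hc, ← (hsum.tsum_mul_left (b : ℤ →ᵇ ℂ))]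
      congr 1
      funext n
      rw [hu]
      simp only []
      rw [pow_succ']
    have h2 : u 0 = (b : ℤ →ᵇ ℂ) := pow_one _
    calc c = u 0 + ∑' n, u (n + 1) := h0
    _ = (b : ℤ →ᵇ ℂ) + (b : ℤ →ᵇ ℂ) * c := by rw [h1, h2]
  set C : ↥BZalg := ⟨c, hcmem⟩ with hC
  have hlift : C = b + b * C := by
    apply Subtype.ext
    push_cast
    exact hkey
  have : φ C = 1 + φ C := by
    conv_lhs => rw [hlift]
    rw [map_add, map_mul, hφb, one_mul]
  exact one_ne_zero (right_eq_add.mp this)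

lemma char_continuous (φ : ↥BZalg →ₙₐ[ℂ] ℂ) : Continuous φ :=
  AddMonoidHomClass.continuous_of_bound φ 1 (fun x => by simpa using char_norm_le φ x)

lemma BZ_dense_ext (φ ψ : ↥BZalg →ₙₐ[ℂ] ℂ)
    (h : ∀ n : ℤ, φ ⟨indBZ n, indBZ_mem n⟩ = ψ ⟨indBZ n, indBZ_mem n⟩) : φ = ψ := by
  have hD : Dense {x : ↥BZalg | (x : ℤ →ᵇ ℂ) ∈ BZspan} := by
    intro x
    rw [closure_subtype]
    have himg : Subtype.val '' {x : ↥BZalg | (x : ℤ →ᵇ ℂ) ∈ BZspan} = (BZspan : Set (ℤ →ᵇ ℂ)) := by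
      ext g
      constructor
      · rintro ⟨y, hy, rfl⟩; exact hy
      · intro hg; exact ⟨⟨g, mem_BZalg_of_span hg⟩, hg, rfl⟩
    rw [himg]
    exact x.2
  have heq : Set.EqOn φ ψ {x : ↥BZalg | (x : ℤ →ᵇ ℂ) ∈ BZspan} := by
    intro x hx
    have key : ∀ g : ℤ →ᵇ ℂ, ∀ _ : g ∈ (Submodule.span ℂ (Set.range indBZ)),
        ∀ hg2 : g ∈ BZalg, φ ⟨g, hg2⟩ = ψ ⟨g, hg2⟩ := by
      intro g hg
      induction hg using Submodule.span_induction with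
      | mem x hx =>
        obtain ⟨n, rfl⟩ := hx
        intro hg2
        exact h n
      | zero =>
        intro hg2
        have : (⟨0, hg2⟩ : ↥BZalg) = 0 := Subtype.ext rfl
        rw [this, map_zero, map_zero]
      | add x y hxm hym ihx ihy =>
        intro hg2
        have hx' : x ∈ BZalg := mem_BZalg_of_span hxm
        have hy' : y ∈ BZalg := mem_BZalg_of_span hym
        have : (⟨x + y, hg2⟩ : ↥BZalg) = ⟨x, hx'⟩ + ⟨y, hy'⟩ := Subtype.ext rfl
        rw [this, map_add, map_add, ihx hx', ihy hy']
      | smul c x hxm ihx =>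
        intro hg2
        have hx' : x ∈ BZalg := mem_BZalg_of_span hxm
        have : (⟨c • x, hg2⟩ : ↥BZalg) = c • ⟨x, hx'⟩ := Subtype.ext rfl
        rw [this, map_smul, map_smul, ihx hx']
    have := key (x : ℤ →ᵇ ℂ) hx x.2
    simpa using this
  exact NonUnitalAlgHom.ext
    (congrFun (Continuous.ext_on hD (char_continuous φ) (char_continuous ψ) heq))

/-- evaluation character -/
noncomputable def evalBZ (n : ℤ) : ↥BZalg →ₙₐ[ℂ] ℂ :=
  { toFun := fun f => (f : ℤ →ᵇ ℂ) n
    map_add' := fun f g => rfl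
    map_zero' := rfl
    map_smul' := fun c f => rfl
    map_mul' := fun f g => rfl }

lemma evalBZ_apply (n : ℤ) (f : ↥BZalg) : evalBZ n f = (f : ℤ →ᵇ ℂ) n := rfl

lemma indBZ_tendsto (n : ℤ) : Tendsto (fun k : ℤ => indBZ n k) atTop (𝓝 (1 : ℂ)) := by
  refine Tendsto.congr' ?_ tendsto_const_nhds
  filter_upwards [eventually_ge_atTop n] with k hk
  simp [indBZ_apply, hk]

lemma isClosed_limset :
    IsClosed {f : ℤ →ᵇ ℂ | ∃ c, Tendsto (fun k : ℤ => f k) atTop (𝓝 c)} := by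
  rw [← closure_subset_iff_isClosed]
  intro f hf
  have hcauchy : Cauchy (Filter.map (fun k : ℤ => f k) atTop) := by
    rw [Metric.cauchy_iff]
    refine ⟨Filter.NeBot.map atTop_neBot _, ?_⟩
    intro ε hε
    obtain ⟨g, hgS, hfg⟩ := Metric.mem_closure_iff.mp hf (ε / 3) (by positivity)
    obtain ⟨c, hc⟩ := hgS
    obtain ⟨N, hN⟩ := (Metric.tendsto_atTop.mp hc) (ε / 6) (by positivity)
    refine ⟨(fun k : ℤ => f k) '' Set.Ici N, Filter.image_mem_map (Filter.mem_atTop N), ?_⟩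
    rintro x ⟨k, hk, rfl⟩ y ⟨l, hl, rfl⟩
    have hfk : dist (f k) (g k) ≤ dist f g := BoundedContinuousFunction.dist_coe_le_dist k
    have hfl : dist (g l) (f l) ≤ dist f g := by
      rw [dist_comm]; exact BoundedContinuousFunction.dist_coe_le_dist l
    calc dist (f k) (f l) ≤ dist (f k) (g k) + dist (g k) (g l) + dist (g l) (f l) :=
          dist_triangle4 _ _ _ _
    _ ≤ dist f g + (dist (g k) c + dist c (g l)) + dist f g := by
        gcongr
        exact dist_triangle _ _ _
    _ < ε / 3 + (ε / 6 + ε / 6) + ε / 3 := by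
        have h1 := hN k hk
        have h2 := hN l hl
        rw [dist_comm c (g l)]
        gcongr
    _ = ε := by ring
  obtain ⟨x, hx⟩ := CompleteSpace.complete hcauchy
  exact ⟨x, hx⟩

lemma BZ_tendsto_exists (f : ↥BZalg) :
    ∃ c, Tendsto (fun k : ℤ => (f : ℤ →ᵇ ℂ) k) atTop (𝓝 c) := by
  have hsub : (BZalg : Set (ℤ →ᵇ ℂ)) ⊆
      {f : ℤ →ᵇ ℂ | ∃ c, Tendsto (fun k : ℤ => f k) atTop (𝓝 c)} := by
    rw [BZalg_coe_set]
    refine closure_minimal ?_ isClosed_limset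
    intro g hg
    induction hg using Submodule.span_induction with
    | mem x hx => obtain ⟨n, rfl⟩ := hx; exact ⟨1, indBZ_tendsto n⟩
    | zero => exact ⟨0, by simpa using (tendsto_const_nhds : Tendsto (fun _ : ℤ => (0:ℂ)) atTop _)⟩
    | add x y _ _ ihx ihy =>
      obtain ⟨cx, hx⟩ := ihx; obtain ⟨cy, hy⟩ := ihy
      exact ⟨cx + cy, by simpa using hx.add hy⟩
    | smul a x _ ihx =>
      obtain ⟨cx, hx⟩ := ihx
      exact ⟨a • cx, by simpa using hx.const_smul a⟩
  exact hsub f.2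

noncomputable def limfunBZ (f : ↥BZalg) : ℂ := limUnder atTop fun k : ℤ => (f : ℤ →ᵇ ℂ) k

lemma limfunBZ_tendsto (f : ↥BZalg) :
    Tendsto (fun k : ℤ => (f : ℤ →ᵇ ℂ) k) atTop (𝓝 (limfunBZ f)) := by
  obtain ⟨c, hc⟩ := BZ_tendsto_exists f
  rw [limfunBZ, hc.limUnder_eq]
  exact hc

/-- the limit character -/
noncomputable def limBZ : ↥BZalg →ₙₐ[ℂ] ℂ :=
  { toFun := limfunBZ
    map_add' := fun f g => tendsto_nhds_unique (limfunBZ_tendsto (f + g))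
      (((limfunBZ_tendsto f).add (limfunBZ_tendsto g)).congr (fun k => rfl))
    map_zero' := tendsto_nhds_unique (limfunBZ_tendsto 0)
      ((tendsto_const_nhds).congr (fun k => rfl))
    map_smul' := fun c f => tendsto_nhds_unique (limfunBZ_tendsto (c • f))
      (((limfunBZ_tendsto f).const_smul c).congr (fun k => rfl))
    map_mul' := fun f g => tendsto_nhds_unique (limfunBZ_tendsto (f * g))
      (((limfunBZ_tendsto f).mul (limfunBZ_tendsto g)).congr (fun k => rfl)) }

lemma limBZ_tendsto (f : ↥BZalg) :
    Tendsto (fun k : ℤ => (f : ℤ →ᵇ ℂ) k) atTop (𝓝 (limBZ f)) := limfunBZ_tendsto f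

lemma limBZ_indBZ (n : ℤ) : limBZ ⟨indBZ n, indBZ_mem n⟩ = 1 :=
  tendsto_nhds_unique (limBZ_tendsto _) (indBZ_tendsto n)

/-- Characters of `B_ℤ`: every nonzero algebra homomorphism `φ : B_ℤ → ℂ` is either an
evaluation `ε_n` for some `n ∈ ℤ` or the limit functional `ε_∞`; conversely each `ε_n` and
`ε_∞` is a character (a nonzero algebra homomorphism), and these are pairwise distinct. -/
theorem characters_of_BZ :
    (∀ φ : ↥BZalg →ₙₐ[ℂ] ℂ, φ ≠ 0 →
        (∃ n : ℤ, ∀ f : ↥BZalg, φ f = (f : ℤ →ᵇ ℂ) n) ∨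
          (∀ f : ↥BZalg, Tendsto (fun k : ℤ => (f : ℤ →ᵇ ℂ) k) atTop (𝓝 (φ f)))) ∧
    (∀ n : ℤ, ∃ φ : ↥BZalg →ₙₐ[ℂ] ℂ, φ ≠ 0 ∧ ∀ f : ↥BZalg, φ f = (f : ℤ →ᵇ ℂ) n) ∧
    (∃ φ : ↥BZalg →ₙₐ[ℂ] ℂ, φ ≠ 0 ∧
        ∀ f : ↥BZalg, Tendsto (fun k : ℤ => (f : ℤ →ᵇ ℂ) k) atTop (𝓝 (φ f))) ∧
    (∀ (n m : ℤ) (φ ψ : ↥BZalg →ₙₐ[ℂ] ℂ), n ≠ m →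
        (∀ f : ↥BZalg, φ f = (f : ℤ →ᵇ ℂ) n) →
        (∀ f : ↥BZalg, ψ f = (f : ℤ →ᵇ ℂ) m) → φ ≠ ψ) ∧
    (∀ (n : ℤ) (φ ψ : ↥BZalg →ₙₐ[ℂ] ℂ),
        (∀ f : ↥BZalg, φ f = (f : ℤ →ᵇ ℂ) n) →
        (∀ f : ↥BZalg, Tendsto (fun k : ℤ => (f : ℤ →ᵇ ℂ) k) atTop (𝓝 (ψ f))) → φ ≠ ψ) := by
  refine ⟨?_, ?_, ?_, ?_, ?_⟩
  · -- classification
    intro φ hφ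
    have hidem : ∀ n : ℤ, φ ⟨indBZ n, indBZ_mem n⟩ * φ ⟨indBZ n, indBZ_mem n⟩
        = φ ⟨indBZ n, indBZ_mem n⟩ := by
      intro n
      have hsq : (⟨indBZ n, indBZ_mem n⟩ * ⟨indBZ n, indBZ_mem n⟩ : ↥BZalg)
          = ⟨indBZ n, indBZ_mem n⟩ :=
        Subtype.ext (by show indBZ n * indBZ n = indBZ n; rw [indBZ_mul, max_self])
      rw [← map_mul, hsq]
    have hdichot : ∀ n : ℤ, φ ⟨indBZ n, indBZ_mem n⟩ = 0 ∨ φ ⟨indBZ n, indBZ_mem n⟩ = 1 := by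
      intro n
      have h2 : φ ⟨indBZ n, indBZ_mem n⟩ * (φ ⟨indBZ n, indBZ_mem n⟩ - 1) = 0 := by
        linear_combination hidem n
      rcases mul_eq_zero.mp h2 with h | h
      · exact Or.inl h
      · exact Or.inr (by linear_combination h)
    have hdown : ∀ m n : ℤ, n ≤ m → φ ⟨indBZ m, indBZ_mem m⟩ = 1 →
        φ ⟨indBZ n, indBZ_mem n⟩ = 1 := by
      intro m n hnm hm
      have hprod : (⟨indBZ n, indBZ_mem n⟩ * ⟨indBZ m, indBZ_mem m⟩ : ↥BZalg)
          = ⟨indBZ m, indBZ_mem m⟩ :=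
        Subtype.ext (by show indBZ n * indBZ m = indBZ m; rw [indBZ_mul, max_eq_right hnm])
      have h3 := congrArg φ hprod
      rw [map_mul, hm, mul_one] at h3
      exact h3
    by_cases hall0 : ∀ n : ℤ, φ ⟨indBZ n, indBZ_mem n⟩ = 0
    · exact absurd (BZ_dense_ext φ 0 (fun n => by simpa using hall0 n)) hφ
    · push_neg at hall0
      obtain ⟨n₀, hn₀⟩ := hall0
      have hn₀1 : φ ⟨indBZ n₀, indBZ_mem n₀⟩ = 1 := (hdichot n₀).resolve_left hn₀
      by_cases hall1 : ∀ n : ℤ, φ ⟨indBZ n, indBZ_mem n⟩ = 1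
      · right
        have hφlim : φ = limBZ :=
          BZ_dense_ext φ limBZ (fun n => by rw [limBZ_indBZ]; exact hall1 n)
        intro f
        rw [hφlim]
        exact limBZ_tendsto f
      · left
        push_neg at hall1
        obtain ⟨m, hm⟩ := hall1
        have hbdd : ∃ b : ℤ, ∀ z : ℤ, φ ⟨indBZ z, indBZ_mem z⟩ = 1 → z ≤ b := by
          refine ⟨m - 1, fun z hz => ?_⟩
          by_contra hc
          push_neg at hc
          exact hm (hdown z m (by omega) hz)
        obtain ⟨N, hN1, hNmax⟩ := Int.exists_greatest_of_bdd hbdd ⟨n₀, hn₀1⟩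
        refine ⟨N, ?_⟩
        have hφeval : φ = evalBZ N := by
          apply BZ_dense_ext
          intro n
          rw [evalBZ_apply, indBZ_apply]
          by_cases hn : n ≤ N
          · rw [if_pos hn]
            exact hdown N n hn hN1
          · rw [if_neg hn]
            rcases hdichot n with h0 | h1
            · exact h0
            · exact absurd (hNmax n h1) hn
        intro f
        rw [hφeval, evalBZ_apply]
  · -- evaluations are characters
    intro n
    refine ⟨evalBZ n, ?_, fun f => rfl⟩
    intro h0
    have h1 : evalBZ n ⟨indBZ n, indBZ_mem n⟩ = 1 := by
      rw [evalBZ_apply, indBZ_apply, if_pos le_rfl]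
    rw [h0] at h1
    simp at h1
  · -- the limit functional is a character
    refine ⟨limBZ, ?_, limBZ_tendsto⟩
    intro h0
    have h1 := limBZ_indBZ 0
    rw [h0] at h1
    simp at h1
  · -- evaluations pairwise distinct
    intro n m φ ψ hnm hφ hψ heq
    set f : ↥BZalg := ⟨indBZ (max n m), indBZ_mem _⟩ with hf
    have hval : (indBZ (max n m)) n = (indBZ (max n m)) m := by
      rw [← hφ f, ← hψ f, heq]
    rw [indBZ_apply, indBZ_apply] at hval
    rcases lt_or_gt_of_ne hnm with h | h
    · rw [if_neg (by omega), if_pos (by omega)] at hval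
      exact zero_ne_one hval
    · rw [if_pos (by omega), if_neg (by omega)] at hval
      exact one_ne_zero hval
  · -- evaluations distinct from the limit functional
    intro n φ ψ hφ hψ heq
    set f : ↥BZalg := ⟨indBZ (n + 1), indBZ_mem _⟩ with hf
    have h1 : ψ f = 1 := tendsto_nhds_unique (hψ f) (indBZ_tendsto (n + 1))
    have h0 : φ f = 0 := by
      rw [hφ f, indBZ_apply, if_neg (by omega)]
    rw [heq, h1] at h0
    exact one_ne_zero h0
end

section
/- Suppose Y is Hausdorff. For the Williams relation ∼ on (Z∞ × Y) × 𝕋 associated to the ℤ-action on Z∞ × Y: for all m, n ∈ ℤ, φ, ψ ∈ Y, and z, w ∈ 𝕋, one has ((m, φ), z) ∼ ((n, ψ), w) if and only if φ = ψ; moreover ((m, φ), z) ∼ ((∞, ψ), w) never holds. -/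
open Filter Topology

/-- The order topology on `Z∞ = ℤ ∪ {∞}` (formally `WithTop ℤ`): every `n ∈ ℤ` is isolated,
and the sets `J_n = {k : ℤ | n ≤ k} ∪ {∞}` form a neighborhood basis at `∞`. -/
noncomputable instance : TopologicalSpace (WithTop ℤ) := Preorder.topology (WithTop ℤ)

instance : OrderTopology (WithTop ℤ) := ⟨rfl⟩

/-- The integer power `σⁿ` (`n : ℤ`) of a homeomorphism `σ : Y ≃ₜ Y`, as a function. -/
def sigmaPow {Y : Type*} [TopologicalSpace Y] (σ : Y ≃ₜ Y) (n : ℤ) : Y → Y :=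
  fun y => (σ.toEquiv ^ n) y

/-- The action of `ℤ` on `Z∞ × Y`: `n·(m, y) = (m + n, y)` for `m ∈ ℤ`, and
`n·(∞, y) = (∞, σⁿ(y))`. -/
def actZ {Y : Type*} [TopologicalSpace Y] (σ : Y ≃ₜ Y) (n : ℤ) (p : WithTop ℤ × Y) :
    WithTop ℤ × Y :=
  (p.1.map (· + n), if p.1 = ⊤ then sigmaPow σ n p.2 else p.2)

/-- The Williams relation on `X × 𝕋` associated to an action `act` of `ℤ` on a topological
space `X`: `(x, z) ∼ (y, w)` iff the closures of the `ℤ`-orbits of `x` and `y` coincide and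
`zⁿ = wⁿ` for all `n` in the stability group of `x`. -/
def williams {X : Type*} [TopologicalSpace X] (act : ℤ → X → X)
    (p q : X × Circle) : Prop :=
  closure (Set.range fun n : ℤ => act n p.1) = closure (Set.range fun n : ℤ => act n q.1) ∧
  ∀ n : ℤ, act n p.1 = p.1 → p.2 ^ n = q.2 ^ n

/-!
The orbit of a finite point `(m, φ)` is `ℤ × {φ}`, whose closure is `Z∞ × {φ}` because `ℤ` is
dense in `Z∞` and points of `Y` are closed; its stabilizer is trivial, so the circle
coordinates impose no condition. The orbit of `(∞, ψ)` stays in the closed set `{∞} × Y`,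
which contains no finite point.
-/

theorem WithTop.denseRange_coe {α : Type*} [LinearOrder α] [NoMaxOrder α] [Nonempty α]
    [TopologicalSpace (WithTop α)] [OrderTopology (WithTop α)] :
    DenseRange ((↑) : α → WithTop α) := by
  intro x
  induction x with
  | top =>
    rw [mem_closure_iff_nhds_basis nhds_top_basis]
    intro a ha
    lift a to α using ha.ne
    obtain ⟨b, hab⟩ := exists_gt a
    exact ⟨b, ⟨b, rfl⟩, WithTop.coe_lt_coe.2 hab⟩
  | coe a => exact subset_closure ⟨a, rfl⟩

section actZ

variable {Y : Type*} [TopologicalSpace Y] (σ : Y ≃ₜ Y)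

@[simp]
theorem actZ_coe (n m : ℤ) (φ : Y) :
    actZ σ n ((m : WithTop ℤ), φ) = (((m + n : ℤ) : WithTop ℤ), φ) := by
  simp [actZ, WithTop.map_coe]

theorem actZ_coe_eq_self_iff (n m : ℤ) (φ : Y) :
    actZ σ n ((m : WithTop ℤ), φ) = ((m : WithTop ℤ), φ) ↔ n = 0 := by
  simp

theorem actZ_zero (p : WithTop ℤ × Y) : actZ σ 0 p = p := by
  obtain ⟨x, y⟩ := p
  induction x <;> simp [actZ, sigmaPow]

theorem range_actZ_coe (m : ℤ) (φ : Y) :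
    (Set.range fun n : ℤ => actZ σ n ((m : WithTop ℤ), φ)) =
      Set.range ((↑) : ℤ → WithTop ℤ) ×ˢ {φ} := by
  ext ⟨x, y⟩
  simp only [actZ_coe, Set.mem_range, Set.mem_prod, Set.mem_singleton_iff, Prod.mk.injEq]
  constructor
  · rintro ⟨n, rfl, rfl⟩
    exact ⟨⟨m + n, rfl⟩, rfl⟩
  · rintro ⟨⟨k, rfl⟩, rfl⟩
    exact ⟨k - m, by rw [add_sub_cancel], rfl⟩

theorem closure_range_actZ_coe [T1Space Y] (m : ℤ) (φ : Y) :
    closure (Set.range fun n : ℤ => actZ σ n ((m : WithTop ℤ), φ)) = Set.univ ×ˢ {φ} := by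
  rw [range_actZ_coe, closure_prod_eq, WithTop.denseRange_coe.closure_range, closure_singleton]

theorem closure_range_actZ_top_subset (ψ : Y) :
    closure (Set.range fun n : ℤ => actZ σ n ((⊤ : WithTop ℤ), ψ)) ⊆ {⊤} ×ˢ Set.univ :=
  closure_minimal (by rintro _ ⟨n, rfl⟩; exact ⟨rfl, trivial⟩)
    (isClosed_singleton.prod isClosed_univ)

theorem mem_closure_range_actZ (p : WithTop ℤ × Y) :
    p ∈ closure (Set.range fun n : ℤ => actZ σ n p) :=
  subset_closure ⟨0, actZ_zero σ p⟩

end actZ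

/-- For Hausdorff `Y`: `((m, φ), z) ∼ ((n, ψ), w)` iff `φ = ψ`, and
`((m, φ), z) ∼ ((∞, ψ), w)` never holds. -/
theorem williams_actZ_int {Y : Type*} [TopologicalSpace Y] [T2Space Y] (σ : Y ≃ₜ Y) :
    (∀ (m n : ℤ) (φ ψ : Y) (z w : Circle),
      williams (actZ σ) (((m : WithTop ℤ), φ), z) (((n : WithTop ℤ), ψ), w) ↔ φ = ψ) ∧
    (∀ (m : ℤ) (φ ψ : Y) (z w : Circle),
      ¬ williams (actZ σ) (((m : WithTop ℤ), φ), z) (((⊤ : WithTop ℤ), ψ), w)) := by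
  refine ⟨fun m n φ ψ z w => ⟨fun ⟨hcl, _⟩ => ?_, ?_⟩, fun m φ ψ z w ⟨hcl, _⟩ => ?_⟩
  · rw [closure_range_actZ_coe, closure_range_actZ_coe] at hcl
    have hφ : ((0 : WithTop ℤ), φ) ∈ (Set.univ : Set (WithTop ℤ)) ×ˢ {ψ} :=
      hcl ▸ ⟨trivial, rfl⟩
    exact hφ.2
  · rintro rfl
    refine ⟨by rw [closure_range_actZ_coe, closure_range_actZ_coe], fun k hk => ?_⟩
    rw [(actZ_coe_eq_self_iff σ k m φ).1 hk, zpow_zero, zpow_zero]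
  · have hmem := mem_closure_range_actZ σ ((m : WithTop ℤ), φ)
    rw [hcl] at hmem
    exact WithTop.coe_ne_top (closure_range_actZ_top_subset σ ψ hmem).1
end
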